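/- Let μ₁, λ > 0 and Λ ∈ ℝ³ with Λᵢ > 0. Let s, Λ̂ : [0,∞) → ℝ³ be differentiable and satisfy ⟨s(t), s′(t)⟩ = −μ₁ ‖s(t)‖² − Σᵢ Λ̂ᵢ(t) |sᵢ(t)| and Λ̂ᵢ′(t) = λ |sᵢ(t)| for each i and all t ≥ 0. Then each Λ̂ᵢ is nondecreasing and bounded, hence converges to a finite limit as t → ∞, and ∫₀^∞ |sᵢ(t)| dt < ∞ for each i. -/

import Mathlib

/-!
The energy `V = ‖s‖² + λ⁻¹ ‖Λ̂‖²` satisfies `V′ = -2μ₁‖s‖² ≤ 0`: the gain terms of the closed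
loop cancel against the adaptation law. Hence `V` is nonincreasing, which bounds every `Λ̂ᵢ` by
`√(λ V(0))`. The adaptation law makes each `Λ̂ᵢ` nondecreasing, so it converges, and `λ|sᵢ|` is
the nonnegative derivative of a convergent function, hence integrable on `[0, ∞)`.
-/

open scoped RealInnerProductSpace Topology
open Set MeasureTheory Filter

section Monotonicity

variable {D : Set ℝ} {f f' : ℝ → ℝ}

theorem Convex.monotoneOn_of_hasDerivWithinAt_nonneg (hD : Convex ℝ D)
    (hf : ∀ t ∈ D, HasDerivWithinAt f (f' t) D t) (hf'₀ : ∀ t ∈ interior D, 0 ≤ f' t) :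
    MonotoneOn f D :=
  _root_.monotoneOn_of_hasDerivWithinAt_nonneg hD (fun t ht => (hf t ht).continuousWithinAt)
    (fun t ht => (hf t (interior_subset ht)).mono interior_subset) hf'₀

theorem Convex.antitoneOn_of_hasDerivWithinAt_nonpos (hD : Convex ℝ D)
    (hf : ∀ t ∈ D, HasDerivWithinAt f (f' t) D t) (hf'₀ : ∀ t ∈ interior D, f' t ≤ 0) :
    AntitoneOn f D :=
  _root_.antitoneOn_of_hasDerivWithinAt_nonpos hD (fun t ht => (hf t ht).continuousWithinAt)
    (fun t ht => (hf t (interior_subset ht)).mono interior_subset) hf'₀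

end Monotonicity

theorem MonotoneOn.exists_tendsto_atTop_of_bddAbove {α β : Type*} [LinearOrder α]
    [ConditionallyCompleteLinearOrder β] [TopologicalSpace β] [OrderTopology β]
    {f : α → β} {a : α} (hf : MonotoneOn f (Ici a)) (hbdd : BddAbove (f '' Ici a)) :
    ∃ l, Tendsto f atTop (𝓝 l) := by
  set g : α → β := fun t => f (max t a)
  have hg : Monotone g := fun t u htu =>
    hf (le_max_right t a) (le_max_right u a) (max_le_max htu le_rfl)
  have hg_bdd : BddAbove (range g) :=
    hbdd.mono (range_subset_iff.2 fun t => mem_image_of_mem f (le_max_right t a))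
  refine ⟨⨆ t, g t, (tendsto_atTop_ciSup hg hg_bdd).congr' ?_⟩
  filter_upwards [eventually_ge_atTop a] with t ht
  simp only [g, max_eq_left ht]

theorem integrableOn_Ici_of_hasDerivWithinAt_nonneg_of_tendsto {a l : ℝ} {g g' : ℝ → ℝ}
    (hg : ∀ t ∈ Ici a, HasDerivWithinAt g (g' t) (Ici a) t) (hg'₀ : ∀ t ∈ Ioi a, 0 ≤ g' t)
    (hlim : Tendsto g atTop (𝓝 l)) : IntegrableOn g' (Ici a) := by
  rw [integrableOn_Ici_iff_integrableOn_Ioi]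
  exact integrableOn_Ioi_deriv_of_nonneg (hg a self_mem_Ici).continuousWithinAt
    (fun t ht => (hg t ht.out.le).hasDerivAt (Ici_mem_nhds ht)) hg'₀ hlim

section SlidingDynamics

variable {ι : Type*} [Fintype ι] {μ₁ lam : ℝ} {s Λhat : ℝ → EuclideanSpace ℝ ι} {D : Set ℝ}

theorem HasDerivWithinAt.euclidean_apply {f : ℝ → EuclideanSpace ℝ ι}
    {f' : EuclideanSpace ℝ ι} {t : ℝ} (hf : HasDerivWithinAt f f' D t) (i : ι) :
    HasDerivWithinAt (fun u => f u i) (f' i) D t :=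
  (EuclideanSpace.proj (𝕜 := ℝ) i).hasFDerivAt.comp_hasDerivWithinAt t hf

noncomputable def slidingLyapunov (lam : ℝ) (s Λhat : ℝ → EuclideanSpace ℝ ι) (t : ℝ) : ℝ :=
  ‖s t‖ ^ 2 + lam⁻¹ * ‖Λhat t‖ ^ 2

theorem hasDerivWithinAt_slidingLyapunov (hlam : lam ≠ 0) {s' Λhat' : EuclideanSpace ℝ ι}
    {t : ℝ} (hs : HasDerivWithinAt s s' D t) (hΛhat : HasDerivWithinAt Λhat Λhat' D t)
    (hclosed : ⟪s t, s'⟫ = -μ₁ * ‖s t‖ ^ 2 - ∑ i, Λhat t i * |s t i|)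
    (hadapt : ∀ i, Λhat' i = lam * |s t i|) :
    HasDerivWithinAt (slidingLyapunov lam s Λhat) (-(2 * μ₁) * ‖s t‖ ^ 2) D t := by
  have hgain : ⟪Λhat t, Λhat'⟫ = lam * ∑ i, Λhat t i * |s t i| := by
    simp only [PiLp.inner_apply, Real.inner_apply, hadapt, Finset.mul_sum]
    exact Finset.sum_congr rfl fun i _ => by ring
  refine (hs.norm_sq.add (hΛhat.norm_sq.const_mul lam⁻¹)).congr_deriv ?_
  rw [hclosed, hgain]
  field_simp
  ring

theorem antitoneOn_slidingLyapunov (hμ₁ : 0 ≤ μ₁) (hlam : lam ≠ 0) (hD : Convex ℝ D)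
    {s' Λhat' : ℝ → EuclideanSpace ℝ ι}
    (hs : ∀ t ∈ D, HasDerivWithinAt s (s' t) D t)
    (hΛhat : ∀ t ∈ D, HasDerivWithinAt Λhat (Λhat' t) D t)
    (hclosed : ∀ t ∈ D, ⟪s t, s' t⟫ = -μ₁ * ‖s t‖ ^ 2 - ∑ i, Λhat t i * |s t i|)
    (hadapt : ∀ t ∈ D, ∀ i, Λhat' t i = lam * |s t i|) :
    AntitoneOn (slidingLyapunov lam s Λhat) D :=
  hD.antitoneOn_of_hasDerivWithinAt_nonpos
    (fun t ht => hasDerivWithinAt_slidingLyapunov hlam (hs t ht) (hΛhat t ht) (hclosed t ht)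
      (hadapt t ht))
    (fun t _ => by nlinarith [sq_nonneg ‖s t‖])

theorem apply_le_sqrt_mul_slidingLyapunov (hlam : 0 < lam) (t : ℝ) (i : ι) :
    Λhat t i ≤ √(lam * slidingLyapunov lam s Λhat t) := by
  refine Real.le_sqrt_of_sq_le ?_
  have hi : Λhat t i ^ 2 ≤ ‖Λhat t‖ ^ 2 := by
    simpa only [Real.norm_eq_abs, sq_abs] using
      pow_le_pow_left₀ (norm_nonneg _) (PiLp.norm_apply_le (Λhat t) i) 2
  have hV : lam * slidingLyapunov lam s Λhat t = lam * ‖s t‖ ^ 2 + ‖Λhat t‖ ^ 2 := by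
    rw [slidingLyapunov, mul_add, mul_inv_cancel_left₀ hlam.ne']
  nlinarith [sq_nonneg ‖s t‖]

end SlidingDynamics

theorem qasmc_gains_bounded_and_s_integrable_general (μ₁ lam : ℝ) (hμ₁ : 0 < μ₁) (hlam : 0 < lam)
    (s Λhat : ℝ → EuclideanSpace ℝ (Fin 3)) (s' Λhat' : ℝ → EuclideanSpace ℝ (Fin 3))
    (hs : ∀ t ∈ Set.Ici (0:ℝ), HasDerivWithinAt s (s' t) (Set.Ici 0) t)
    (hΛhat : ∀ t ∈ Set.Ici (0:ℝ), HasDerivWithinAt Λhat (Λhat' t) (Set.Ici 0) t)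
    (hclosed : ∀ t ∈ Set.Ici (0:ℝ),
      ⟪s t, s' t⟫ = -μ₁ * ‖s t‖ ^ 2 - ∑ i, Λhat t i * |s t i|)
    (hadapt : ∀ t ∈ Set.Ici (0:ℝ), ∀ i, Λhat' t i = lam * |s t i|) :
    ∀ i : Fin 3,
      MonotoneOn (fun t => Λhat t i) (Set.Ici 0) ∧
      (∃ M : ℝ, ∀ t ∈ Set.Ici (0:ℝ), Λhat t i ≤ M) ∧
      (∃ l : ℝ, Filter.Tendsto (fun t => Λhat t i) Filter.atTop (nhds l)) ∧
      MeasureTheory.IntegrableOn (fun t => |s t i|) (Set.Ici 0) := by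
  intro i
  have hΛhat_i : ∀ t ∈ Ici (0:ℝ),
      HasDerivWithinAt (fun u => Λhat u i) (lam * |s t i|) (Ici 0) t := fun t ht =>
    hadapt t ht i ▸ (hΛhat t ht).euclidean_apply i
  have hmono : MonotoneOn (fun t => Λhat t i) (Ici 0) :=
    (convex_Ici 0).monotoneOn_of_hasDerivWithinAt_nonneg hΛhat_i fun t _ => by positivity
  have hV := antitoneOn_slidingLyapunov hμ₁.le hlam.ne' (convex_Ici 0) hs hΛhat hclosed hadapt
  have hbound : ∀ t ∈ Ici (0:ℝ), Λhat t i ≤ √(lam * slidingLyapunov lam s Λhat 0) :=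
    fun t ht => (apply_le_sqrt_mul_slidingLyapunov hlam t i).trans <|
      Real.sqrt_le_sqrt <| mul_le_mul_of_nonneg_left (hV self_mem_Ici ht ht) hlam.le
  obtain ⟨l, hl⟩ := hmono.exists_tendsto_atTop_of_bddAbove ⟨_, forall_mem_image.2 hbound⟩
  refine ⟨hmono, ⟨_, hbound⟩, ⟨l, hl⟩, ?_⟩
  have hint := integrableOn_Ici_of_hasDerivWithinAt_nonneg_of_tendsto hΛhat_i
    (fun t _ => by positivity) hl
  have hint' : IntegrableOn (fun t => lam⁻¹ * (lam * |s t i|)) (Ici 0) := hint.const_mul lam⁻¹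
  simpa only [inv_mul_cancel_left₀ hlam.ne'] using hint'

/-- **Boundedness and integrability in the proof of Theorem 2.** Along the closed-loop
sliding dynamics `⟨s, s′⟩ = −μ₁‖s‖² − Σᵢ Λ̂ᵢ|sᵢ|` with adaptation law `Λ̂ᵢ′ = λ|sᵢ|`,
each adaptive gain `Λ̂ᵢ` is nondecreasing and bounded, hence converges to a finite limit,
and `∫₀^∞ |sᵢ(t)| dt < ∞` for each `i`. -/
theorem qasmc_gains_bounded_and_s_integrable (μ₁ lam : ℝ) (hμ₁ : 0 < μ₁) (hlam : 0 < lam)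
    (Λ : EuclideanSpace ℝ (Fin 3)) (hΛ : ∀ i, 0 < Λ i)
    (s Λhat : ℝ → EuclideanSpace ℝ (Fin 3)) (s' Λhat' : ℝ → EuclideanSpace ℝ (Fin 3))
    (hs : ∀ t ∈ Set.Ici (0:ℝ), HasDerivWithinAt s (s' t) (Set.Ici 0) t)
    (hΛhat : ∀ t ∈ Set.Ici (0:ℝ), HasDerivWithinAt Λhat (Λhat' t) (Set.Ici 0) t)
    (hclosed : ∀ t ∈ Set.Ici (0:ℝ),
      ⟪s t, s' t⟫ = -μ₁ * ‖s t‖ ^ 2 - ∑ i, Λhat t i * |s t i|)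
    (hadapt : ∀ t ∈ Set.Ici (0:ℝ), ∀ i, Λhat' t i = lam * |s t i|) :
    ∀ i : Fin 3,
      MonotoneOn (fun t => Λhat t i) (Set.Ici 0) ∧
      (∃ M : ℝ, ∀ t ∈ Set.Ici (0:ℝ), Λhat t i ≤ M) ∧
      (∃ l : ℝ, Filter.Tendsto (fun t => Λhat t i) Filter.atTop (nhds l)) ∧
      MeasureTheory.IntegrableOn (fun t => |s t i|) (Set.Ici 0) :=
  qasmc_gains_bounded_and_s_integrable_general μ₁ lam hμ₁ hlam s Λhat s' Λhat' hs hΛhat hclosed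
    hadapt
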